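/- arXiv:1812.07500 — 6 statements merged into one kernel-verified Lean document; each statement's English description precedes it below -/
import Mathlib

section
/- In the shift graph on k-tuples with k ≥ 2, every odd cycle has length at least 2k+1. -/
/-!
Unroll an odd closed walk of length `ℓ` into an `ℓ`-periodic sequence of tuples. With at least
two coordinates the first coordinate goes up along forward shifts and down along backward ones,
so somewhere a forward step is followed by a backward one, and the two tuples around this peak
agree after their first coordinate. Dropping the first coordinate is a homomorphism from
`(k+1)`-tuples to `k`-tuples which turns the peak into a backtrack; cutting it out gives an odd
closed walk of length `ℓ - 2` on `k`-tuples. Down at one coordinate, odd closed walks have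
length at least `3`.
-/

/-- `Shifts k a b` means `a_{i+1} = b_i` for all `i` with `i+1 < k`,
i.e. `b` is obtained from `a` by shifting down one place. -/
def Shifts {n k : ℕ} (a b : Fin k → Fin n) : Prop :=
  ∀ (i : ℕ) (h : i + 1 < k), a ⟨i + 1, h⟩ = b ⟨i, Nat.lt_of_succ_lt h⟩

/-- The shift graph on strictly increasing `k`-tuples with entries in `{1,…,n}`
(here realized as `Fin n`): two tuples are adjacent if one is a shift of the other. -/
def shiftGraph (n k : ℕ) (hk : 2 ≤ k) : SimpleGraph {a : Fin k → Fin n // StrictMono a} where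
  Adj x y := Shifts x.1 y.1 ∨ Shifts y.1 x.1
  symm := by constructor; rintro x y (h | h); exacts [Or.inr h, Or.inl h]
  loopless := by
    constructor
    rintro ⟨a, ha⟩ (h | h) <;>
    · have h1 : (0 : ℕ) + 1 < k := by omega
      have := h 0 h1
      have := ha (show (⟨0, by omega⟩ : Fin k) < ⟨1, h1⟩ by simp [Fin.lt_def])
      simp_all [Fin.ext_iff]
      omega

open Function

section Periodic

variable {α : Type*} {R : α → α → Prop}

lemma exists_periodic_of_closed {f : ℕ → α} {m : ℕ} (hm : 0 < m) (hfm : f m = f 0)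
    (hf : ∀ i < m, R (f i) (f (i + 1))) :
    ∃ d : ℕ → α, Periodic d m ∧ ∀ j, R (d j) (d (j + 1)) := by
  refine ⟨fun j => f (j % m), fun j => by simp, fun j => ?_⟩
  have hj := Nat.mod_lt j hm
  have hsucc : (j + 1) % m = (j % m + 1) % m := (Nat.mod_add_mod j m 1).symm
  show R (f (j % m)) (f ((j + 1) % m))
  by_cases hlt : j % m + 1 < m
  · rw [hsucc, Nat.mod_eq_of_lt hlt]
    exact hf _ hj
  · have hwrap : j % m + 1 = m := by omega
    rw [hsucc, hwrap, Nat.mod_self, ← hfm]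
    simpa only [hwrap] using hf _ hj

lemma exists_periodic_sub_two {c : ℕ → α} {ℓ j : ℕ} (hper : Periodic c ℓ) (hℓ : 3 ≤ ℓ)
    (hc : ∀ i, R (c i) (c (i + 1))) (hback : c j = c (j + 2)) :
    ∃ d : ℕ → α, Periodic d (ℓ - 2) ∧ ∀ i, R (d i) (d (i + 1)) := by
  refine exists_periodic_of_closed (f := fun i => c (j + 2 + i)) (by omega) ?_ fun i _ => hc _
  simp only [add_zero, show j + 2 + (ℓ - 2) = j + ℓ by omega, hper j, hback]

lemma exists_rel_and_rel_of_periodic {a : ℕ → α} {ℓ : ℕ} (hper : Periodic a ℓ) (hℓ : 0 < ℓ)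
    (hstep : ∀ j, R (a j) (a (j + 1)) ∨ R (a (j + 1)) (a j))
    (hfwd : ¬ ∀ j, R (a j) (a (j + 1))) (hbwd : ¬ ∀ j, R (a (j + 1)) (a j)) :
    ∃ j, R (a j) (a (j + 1)) ∧ R (a (j + 2)) (a (j + 1)) := by
  by_contra! hno
  obtain ⟨i, hi⟩ := not_forall.mp hbwd
  have hfrom : ∀ m ≥ i, R (a m) (a (m + 1)) := by
    intro m hm
    induction m, hm using Nat.le_induction with
    | base => exact (hstep i).resolve_right hi
    | succ m _ ih => exact (hstep (m + 1)).resolve_right (hno m ih)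
  refine hfwd fun j => ?_
  have hper' : Periodic a (i * ℓ) := by simpa using hper.nat_mul i
  have h := hfrom (j + i * ℓ) (by nlinarith)
  rwa [hper' j, add_right_comm, hper' (j + 1)] at h

lemma SimpleGraph.three_le_of_periodic {V : Type*} {G : SimpleGraph V} {a : ℕ → V} {ℓ : ℕ}
    (hper : Periodic a ℓ) (hodd : Odd ℓ) (hadj : ∀ j, G.Adj (a j) (a (j + 1))) : 3 ≤ ℓ := by
  obtain ⟨t, rfl⟩ := hodd
  rcases t with _ | t
  · exact absurd (hper 0).symm (hadj 0).ne
  · omega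

end Periodic

namespace Shifts

variable {n k : ℕ}

lemma tail {a b : Fin (k + 1) → Fin n} (h : Shifts a b) : Shifts (Fin.tail a) (Fin.tail b) :=
  fun i hi => h (i + 1) (by omega)

lemma tail_eq_tail {a b c : Fin (k + 1) → Fin n} (hab : Shifts a b) (hcb : Shifts c b) :
    Fin.tail a = Fin.tail c :=
  funext fun i => (hab i (by omega)).trans (hcb i (by omega)).symm

lemma head_lt {a b : Fin (k + 2) → Fin n} (ha : StrictMono a) (h : Shifts a b) : a 0 < b 0 :=
  (ha (show (0 : Fin (k + 2)) < 1 from Fin.zero_lt_one)).trans_eq (h 0 (by omega))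

lemma tail_ne {a b : Fin (k + 2) → Fin n} (hb : StrictMono b) (h : Shifts a b) :
    Fin.tail a ≠ Fin.tail b := fun he =>
  (hb (show (0 : Fin (k + 2)) < 1 from Fin.zero_lt_one)).ne <|
    (h 0 (by omega)).symm.trans (congrFun he 0)

end Shifts

/-- Unlike `shiftGraph`, defined for every `k`, so that dropping a coordinate is a homomorphism
down to `k = 1` (where all distinct tuples are adjacent). -/
def shiftGraph' (n k : ℕ) : SimpleGraph {a : Fin k → Fin n // StrictMono a} :=
  SimpleGraph.fromRel fun x y => Shifts x.1 y.1

lemma shiftGraph_eq_shiftGraph' (n k : ℕ) (hk : 2 ≤ k) : shiftGraph n k hk = shiftGraph' n k := by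
  ext x y
  exact ⟨fun h => ⟨(shiftGraph n k hk).ne_of_adj h, h⟩, fun h => h.2⟩

def shiftGraph'.tailHom (n k : ℕ) : shiftGraph' n (k + 2) →g shiftGraph' n (k + 1) where
  toFun x := ⟨Fin.tail x.1, x.2.comp Fin.strictMono_succ⟩
  map_rel' := by
    rintro x y ⟨-, h | h⟩
    · exact ⟨fun he => h.tail_ne y.2 (congrArg Subtype.val he), Or.inl h.tail⟩
    · exact ⟨fun he => h.tail_ne x.2 (congrArg Subtype.val he).symm, Or.inr h.tail⟩

namespace shiftGraph'

variable {n ℓ : ℕ}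

lemma exists_shifts_and_shifts {k : ℕ} {a : ℕ → {x : Fin (k + 2) → Fin n // StrictMono x}}
    (hper : Periodic a ℓ) (hℓ : 0 < ℓ)
    (hadj : ∀ j, (shiftGraph' n (k + 2)).Adj (a j) (a (j + 1))) :
    ∃ j, Shifts (a j).1 (a (j + 1)).1 ∧ Shifts (a (j + 2)).1 (a (j + 1)).1 := by
  have hhead : Periodic (fun j => (a j).1 0) ℓ := hper.comp fun x => x.1 0
  refine exists_rel_and_rel_of_periodic (R := fun x y => Shifts x.1 y.1) hper hℓ
    (fun j => (hadj j).2) (fun hfwd => ?_) (fun hbwd => ?_)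
  · exact hhead.not_injective hℓ.ne' <| StrictMono.injective <|
      strictMono_nat_of_lt_succ fun j => (hfwd j).head_lt (a j).2
  · exact hhead.not_injective hℓ.ne' <| StrictAnti.injective <|
      strictAnti_nat_of_succ_lt fun j => (hbwd j).head_lt (a (j + 1)).2

theorem two_mul_add_three_le_of_periodic (k : ℕ)
    {a : ℕ → {x : Fin (k + 1) → Fin n // StrictMono x}} (hper : Periodic a ℓ) (hodd : Odd ℓ)
    (hadj : ∀ j, (shiftGraph' n (k + 1)).Adj (a j) (a (j + 1))) :
    2 * k + 3 ≤ ℓ := by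
  have hℓ := SimpleGraph.three_le_of_periodic hper hodd hadj
  induction k generalizing ℓ with
  | zero => exact hℓ
  | succ k ih =>
    obtain ⟨j, hfwd, hbwd⟩ := exists_shifts_and_shifts hper (by omega) hadj
    have hback : tailHom n k (a j) = tailHom n k (a (j + 2)) :=
      Subtype.ext (Shifts.tail_eq_tail hfwd hbwd)
    obtain ⟨d, hdper, hdadj⟩ := exists_periodic_sub_two (hper.comp (tailHom n k)) hℓ
      (fun i => (tailHom n k).map_adj (hadj i)) hback
    have hdodd : Odd (ℓ - 2) := Nat.Odd.sub_even (by omega) hodd even_two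
    have := ih hdper hdodd hdadj (SimpleGraph.three_le_of_periodic hdper hdodd hdadj)
    omega

end shiftGraph'

theorem shiftGraph_odd_cycle_long_general (n k : ℕ) (hk : 2 ≤ k)
    (v : {a : Fin k → Fin n // StrictMono a})
    (c : (shiftGraph n k hk).Walk v v) (hodd : Odd c.length) :
    2 * k + 1 ≤ c.length := by
  obtain ⟨k, rfl⟩ : ∃ k', k = k' + 1 := ⟨k - 1, by omega⟩
  obtain ⟨a, hper, hadj⟩ := exists_periodic_of_closed hodd.pos (by simp)
    fun i hi => c.adj_getVert_succ hi
  rw [shiftGraph_eq_shiftGraph'] at hadj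
  have := shiftGraph'.two_mul_add_three_le_of_periodic k hper hodd hadj
  omega

/-- In the shift graph on `k`-tuples with `k ≥ 2`, every odd cycle has length
at least `2k+1`. -/
theorem shiftGraph_odd_cycle_long (n k : ℕ) (hk : 2 ≤ k) (hn : 2 * k < n)
    (v : {a : Fin k → Fin n // StrictMono a})
    (c : (shiftGraph n k hk).Walk v v) (hc : c.IsCycle) (hodd : Odd c.length) :
    2 * k + 1 ≤ c.length :=
  shiftGraph_odd_cycle_long_general n k hk v c hodd
end

section
/- Every odd cycle in the Kneser graph K(n,k) has length at least n/(n−2k). -/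
/-- The Kneser graph `K(n,k)`: vertices are the `k`-element subsets of `{1,…,n}`,
two of them being adjacent iff they are disjoint (and distinct). -/
def kneserGraph (n k : ℕ) : SimpleGraph {s : Finset (Fin n) // s.card = k} where
  Adj x y := x ≠ y ∧ Disjoint x.1 y.1
  symm := ⟨by rintro x y ⟨h1, h2⟩; exact ⟨h1.symm, h2.symm⟩⟩
  loopless := ⟨by rintro x ⟨h1, _⟩; exact h1 rfl⟩

/-!
Measure how far a vertex `w` has moved from the start `v` by `#(v \ w)`, a pseudometric on
`k`-sets. Two steps of a walk move at most `n - 2k`: if `u` and `x` are both disjoint from `w`,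
then `u ∪ x` lies in the `n - k` points off `w`, so `#(u \ x) = #(u ∪ x) - k ≤ n - 2k`.
Hence after `2t` steps `#(v \ w) ≤ t (n - 2k)`. On an odd closed walk of length `2t + 1`
the vertex reached after `2t` steps is adjacent to `v`, so it is disjoint from `v` and
`k ≤ t (n - 2k)`, which rearranges to `n ≤ (2t + 1)(n - 2k)`.
-/

open Finset

theorem Finset.card_sdiff_le_card_sdiff_add_card_sdiff {α : Type*} [DecidableEq α]
    (s t u : Finset α) : #(s \ u) ≤ #(s \ t) + #(t \ u) :=
  (card_le_card (sdiff_triangle s t u)).trans (card_union_le _ _)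

namespace kneserGraph

variable {n k : ℕ}

theorem two_mul_le_of_adj {u w : {s : Finset (Fin n) // s.card = k}}
    (h : (kneserGraph n k).Adj u w) : 2 * k ≤ n := by
  have := card_union_of_disjoint h.2
  have := card_le_univ (u.1 ∪ w.1)
  rw [Fintype.card_fin] at this
  omega

theorem card_sdiff_le_of_adj_of_adj {u w x : {s : Finset (Fin n) // s.card = k}}
    (huw : (kneserGraph n k).Adj u w) (hwx : (kneserGraph n k).Adj w x) :
    #(u.1 \ x.1) ≤ n - 2 * k := by
  have hsub : u.1 ∪ x.1 ⊆ w.1ᶜ :=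
    union_subset (subset_compl_iff_disjoint_right.2 huw.2)
      (subset_compl_iff_disjoint_right.2 hwx.2.symm)
  have hunion := card_le_card hsub
  rw [card_compl, Fintype.card_fin, w.2] at hunion
  have := card_sdiff_add_card u.1 x.1
  rw [x.2] at this
  omega

theorem card_sdiff_getVert_two_mul_le {u w : {s : Finset (Fin n) // s.card = k}}
    (p : (kneserGraph n k).Walk u w) {j : ℕ} (hj : 2 * j ≤ p.length) :
    #(u.1 \ (p.getVert (2 * j)).1) ≤ j * (n - 2 * k) := by
  induction j with
  | zero => simp
  | succ j ih =>
    have htwo := card_sdiff_le_of_adj_of_adj (p.adj_getVert_succ (i := 2 * j) (by omega))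
      (p.adj_getVert_succ (i := 2 * j + 1) (by omega))
    calc #(u.1 \ (p.getVert (2 * (j + 1))).1)
        ≤ #(u.1 \ (p.getVert (2 * j)).1) + #((p.getVert (2 * j)).1 \ (p.getVert (2 * j + 2)).1) :=
          card_sdiff_le_card_sdiff_add_card_sdiff _ _ _
      _ ≤ j * (n - 2 * k) + (n - 2 * k) := add_le_add (ih (by omega)) htwo
      _ = (j + 1) * (n - 2 * k) := by ring

end kneserGraph

theorem kneserGraph_odd_cycle_long_general (n k : ℕ)
    (v : {s : Finset (Fin n) // s.card = k})
    (c : (kneserGraph n k).Walk v v) (hodd : Odd c.length) :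
    n ≤ c.length * (n - 2 * k) := by
  obtain ⟨t, ht⟩ := hodd
  have hlast : (kneserGraph n k).Adj (c.getVert (2 * t)) v := by
    simpa [← ht] using c.adj_getVert_succ (i := 2 * t) (by omega)
  have hfar : #(v.1 \ (c.getVert (2 * t)).1) = k := by
    rw [sdiff_eq_self_of_disjoint hlast.2.symm, v.2]
  have hk := kneserGraph.card_sdiff_getVert_two_mul_le c (j := t) (by omega)
  have hn := kneserGraph.two_mul_le_of_adj hlast
  rw [ht, add_mul, one_mul, mul_assoc]
  omega

/-- Every odd cycle in the Kneser graph `K(n,k)` has length at least `n/(n−2k)`,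
i.e. its length multiplied by `n − 2k` is at least `n`. -/
theorem kneserGraph_odd_cycle_long (n k : ℕ) (h2k : 2 * k < n) (hk : 0 < k)
    (v : {s : Finset (Fin n) // s.card = k})
    (c : (kneserGraph n k).Walk v v) (hc : c.IsCycle) (hodd : Odd c.length) :
    n ≤ c.length * (n - 2 * k) :=
  kneserGraph_odd_cycle_long_general n k v c hodd
end

section
/- Each graph G_k in Mycielski's construction is triangle-free and has chromatic number exactly k. -/
/-- The adjacency relation of the Mycielskian of `G`: on vertex set `V ⊕ V ⊕ Unit`,
where `Sum.inl i` are the original vertices `aᵢ`, `Sum.inr (Sum.inl i)` are the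
shadow vertices `bᵢ` and `Sum.inr (Sum.inr ())` is the apex `c`. -/
def mycAdj {V : Type*} (G : SimpleGraph V) : (V ⊕ V ⊕ Unit) → (V ⊕ V ⊕ Unit) → Prop
  | Sum.inl i, Sum.inl j => G.Adj i j
  | Sum.inl i, Sum.inr (Sum.inl j) => G.Adj i j
  | Sum.inr (Sum.inl i), Sum.inl j => G.Adj i j
  | Sum.inr (Sum.inl _), Sum.inr (Sum.inr _) => True
  | Sum.inr (Sum.inr _), Sum.inr (Sum.inl _) => True
  | _, _ => False

/-- The Mycielskian of a graph. -/
def mycielskian {V : Type*} (G : SimpleGraph V) : SimpleGraph (V ⊕ V ⊕ Unit) where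
  Adj := mycAdj G
  symm := by
    constructor
    rintro (i | i | i) (j | j | j) h <;> simp only [mycAdj] at h ⊢ <;>
      first | exact h.symm | exact h | trivial
  loopless := by constructor; rintro (i | i | i) h <;> simp only [mycAdj] at h <;> exact G.loopless.irrefl i h

/-- The vertex types of the iterated Mycielski construction, starting from `K₂`. -/
def mycVert : ℕ → Type
  | 0 => Fin 2
  | j + 1 => mycVert j ⊕ mycVert j ⊕ Unit

/-- The iterated Mycielski graphs: `mycGraph 0 = K₂ (= G₂)` and
`mycGraph (j+1)` is the Mycielskian of `mycGraph j` (so `mycGraph j = G_{j+2}`). -/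
def mycGraph : (j : ℕ) → SimpleGraph (mycVert j)
  | 0 => ⊤
  | j + 1 => mycielskian (mycGraph j)

instance mycVertFintype : ∀ j, Fintype (mycVert j)
  | 0 => inferInstanceAs (Fintype (Fin 2))
  | j + 1 =>
    letI := mycVertFintype j
    inferInstanceAs (Fintype (mycVert j ⊕ mycVert j ⊕ Unit))

/-!
The apex is adjacent exactly to the shadows, and the shadows form an independent set, so a
triangle of the Mycielskian avoids the apex and contains at most one shadow `bᵢ`; replacing it
by `aᵢ`, which has the same neighbours among the original vertices, gives a triangle of `G`.

Colouring `bᵢ` like `aᵢ` and `c` with a new colour turns an `n`-colouring of `G` into an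
`(n+1)`-colouring of the Mycielskian. Conversely, in an `(n+1)`-colouring of the Mycielskian
no shadow has the colour of `c`, so recolouring each `aᵢ` of that colour with the colour of
`bᵢ` gives an `n`-colouring of `G`. Hence the Mycielskian raises the chromatic number by
exactly one, and induction from `G₂ = K₂` finishes the proof.
-/

namespace SimpleGraph

variable {V α : Type*} {G : SimpleGraph V}

@[simp]
lemma mycielskian_adj (x y : V ⊕ V ⊕ Unit) : (mycielskian G).Adj x y ↔ mycAdj G x y :=
  Iff.rfl

lemma CliqueFree.mycielskian (hG : G.CliqueFree 3) : (mycielskian G).CliqueFree 3 := by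
  classical
  have no_triangle {a b c : V} (hab : G.Adj a b) (hac : G.Adj a c) (hbc : G.Adj b c) : False :=
    hG {a, b, c} (is3Clique_triple_iff.2 ⟨hab, hac, hbc⟩)
  intro s hs
  obtain ⟨a, b, c, hab, hac, hbc, -⟩ := is3Clique_iff.1 hs
  rcases a with i | i | i <;> rcases b with j | j | j <;> rcases c with k | k | k <;>
    simp only [mycielskian_adj, mycAdj] at hab hac hbc <;>
    first | exact hab | exact hac | exact hbc | exact no_triangle hab hac hbc

lemma Colorable.mycielskian_succ {n : ℕ} (h : G.Colorable n) :
    (mycielskian G).Colorable (n + 1) := by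
  obtain ⟨f⟩ := h
  refine ⟨Coloring.mk
    (fun | Sum.inl v | Sum.inr (Sum.inl v) => (f v).castSucc | Sum.inr (Sum.inr _) => Fin.last n)
    ?_⟩
  rintro (i | i | i) (j | j | j) hadj <;>
    simp only [mycielskian_adj, mycAdj] at hadj <;>
    first
      | exact hadj.elim
      | exact fun he => f.valid hadj (Fin.castSucc_injective _ he)
      | exact (Fin.castSucc_lt_last _).ne
      | exact (Fin.castSucc_lt_last _).ne'

noncomputable def Coloring.ofMycielskian (f : (mycielskian G).Coloring α) :
    G.Coloring {x : α // x ≠ f (Sum.inr (Sum.inr ()))} := by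
  classical
  set apex := f (Sum.inr (Sum.inr ()))
  have shadow_ne_apex (v : V) : f (Sum.inr (Sum.inl v)) ≠ apex :=
    f.valid (show (mycielskian G).Adj _ _ from trivial)
  refine Coloring.mk
    (fun v => if hv : f (Sum.inl v) = apex then ⟨_, shadow_ne_apex v⟩ else ⟨_, hv⟩) ?_
  intro v w hvw heq
  have h_aa : (mycielskian G).Adj (Sum.inl v) (Sum.inl w) := hvw
  have h_ba : (mycielskian G).Adj (Sum.inr (Sum.inl v)) (Sum.inl w) := hvw
  have h_ab : (mycielskian G).Adj (Sum.inl v) (Sum.inr (Sum.inl w)) := hvw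
  by_cases hv : f (Sum.inl v) = apex <;> by_cases hw : f (Sum.inl w) = apex <;>
    simp only [hv, hw, dite_true, dite_false, Subtype.mk.injEq] at heq
  · exact f.valid h_aa (hv.trans hw.symm)
  · exact f.valid h_ba heq
  · exact f.valid h_ab heq
  · exact f.valid h_aa heq

lemma Colorable.of_mycielskian_succ {n : ℕ} (h : (mycielskian G).Colorable (n + 1)) :
    G.Colorable n := by
  obtain ⟨f⟩ := h
  simpa [Fintype.card_subtype_compl] using f.ofMycielskian.colorable

lemma chromaticNumber_mycielskian {n : ℕ} (h : G.chromaticNumber = n + 1) :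
    (mycielskian G).chromaticNumber = (n + 1 : ℕ) + 1 := by
  rw [chromaticNumber_eq_iff_colorable_not_colorable] at h ⊢
  exact ⟨h.1.mycielskian_succ, fun h' => h.2 h'.of_mycielskian_succ⟩

end SimpleGraph

open SimpleGraph

lemma mycGraph_cliqueFree (j : ℕ) : (mycGraph j).CliqueFree 3 := by
  induction j with
  | zero => exact cliqueFree_of_card_lt (by decide)
  | succ j ih => exact ih.mycielskian

lemma mycGraph_chromaticNumber (j : ℕ) : (mycGraph j).chromaticNumber = (j + 1 : ℕ) + 1 := by
  induction j with
  | zero => exact chromaticNumber_top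
  | succ j ih => exact chromaticNumber_mycielskian ih

/-- Each graph `G_k` (`k ≥ 2`) in Mycielski's construction is triangle-free and has
chromatic number exactly `k`. -/
theorem mycGraph_triangleFree_chromatic (j : ℕ) :
    (mycGraph j).CliqueFree 3 ∧ (mycGraph j).chromaticNumber = (j + 2 : ℕ) :=
  ⟨mycGraph_cliqueFree j, by exact_mod_cast mycGraph_chromaticNumber j⟩
end

section
/- A forest H is χ-bounding if and only if every component of H is χ-bounding. -/
/-- A graph `H` is χ-bounding if the class of graphs with no induced subgraph isomorphic
to `H` is χ-bounded: there is a function `f` with `χ(G) ≤ f(ω(G))` for every finite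
`H`-free graph `G`. -/
def ChiBounding {W : Type} (H : SimpleGraph W) : Prop :=
  ∃ f : ℕ → ℕ, ∀ (V : Type) [Fintype V] (G : SimpleGraph V),
    ¬ Nonempty (H ↪g G) → G.chromaticNumber ≤ (f G.cliqueNum : ℕ∞)

/-!
Adding the components one at a time, it suffices to show that `H₁ ⊕g H₂` is χ-bounding when
`H₁` is finite and `H₁`, `H₂` are χ-bounding. Let `G` be `(H₁ ⊕g H₂)`-free with
`ω(G) ≤ k + 1`. If `G` has no induced `H₁`, the bound for `H₁` applies. Otherwise fix an
induced copy of `H₁` and let `N` be the union of the closed neighbourhoods of its `|H₁|`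
vertices. An induced `H₂` outside `N` would complete the copy of `H₁` to an induced
`H₁ ⊕g H₂`, so `G - N` is coloured by the bound for `H₂`; and a neighbourhood in `G` has
clique number at most `k`, so `G[N]` is coloured by induction on `k`.
-/

namespace SimpleGraph

variable {V : Type*} {G : SimpleGraph V}

theorem Colorable.induce_union {s t : Set V} {m n : ℕ} (hs : (G.induce s).Colorable m)
    (ht : (G.induce t).Colorable n) : (G.induce (s ∪ t)).Colorable (m + n) := by
  classical
  obtain ⟨C₁⟩ := hs
  obtain ⟨C₂⟩ := ht
  let C : (G.induce (s ∪ t)).Coloring (Fin m ⊕ Fin n) := Coloring.mk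
    (fun v => if hv : v.1 ∈ s then .inl (C₁ ⟨v, hv⟩)
      else .inr (C₂ ⟨v, v.2.resolve_left hv⟩))
    (by
      rintro ⟨v, hv'⟩ ⟨w, hw'⟩ hadj
      by_cases hv : v ∈ s <;> by_cases hw : w ∈ s <;> simp only [hv, hw, dif_pos, dif_neg,
        not_false_iff, ne_eq, Sum.inl.injEq, Sum.inr.injEq, reduceCtorEq]
      · exact C₁.valid (show G.Adj v w from hadj)
      · exact C₂.valid (show G.Adj v w from hadj))
  simpa using C.colorable

theorem Colorable.induce_insert {s : Set V} {n : ℕ} (a : V) (h : (G.induce s).Colorable n) :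
    (G.induce (insert a s)).Colorable (n + 1) := by
  have ha : (G.induce {a}).Colorable 1 := by simpa using (G.induce {a}).colorable_of_fintype
  rw [← Set.union_singleton]
  exact h.induce_union ha

theorem Colorable.induce_iUnion {ι : Type*} [Fintype ι] {S : ι → Set V} {m : ℕ}
    (h : ∀ i, (G.induce (S i)).Colorable m) :
    (G.induce (⋃ i, S i)).Colorable (Fintype.card ι * m) := by
  classical
  let idx (v : ↥(⋃ i, S i)) : ι := (Set.mem_iUnion.mp v.2).choose
  have hidx (v : ↥(⋃ i, S i)) : v.1 ∈ S (idx v) := (Set.mem_iUnion.mp v.2).choose_spec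
  let C : (G.induce (⋃ i, S i)).Coloring (ι × Fin m) := Coloring.mk
    (fun v => (idx v, (h (idx v)).some ⟨v, hidx v⟩))
    (by
      intro v w hadj hvw
      simp only [Prod.mk.injEq] at hvw
      obtain ⟨hi, hc⟩ := hvw
      have hcongr : ∀ i j (_ : i = j) (hwi : w.1 ∈ S i) (hwj : w.1 ∈ S j),
          (h i).some ⟨w, hwi⟩ = (h j).some ⟨w, hwj⟩ := by
        rintro i _ rfl _ _
        rfl
      exact (h (idx v)).some.valid (v := ⟨v, hidx v⟩) (w := ⟨w, hi ▸ hidx w⟩) hadj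
        (hc.trans (hcongr _ _ hi.symm _ _)))
  simpa using C.colorable

theorem Colorable.of_induce_of_induce_compl {s : Set V} {m n : ℕ}
    (hs : (G.induce s).Colorable m) (hsc : (G.induce sᶜ).Colorable n) : G.Colorable (m + n) := by
  have h := hs.induce_union hsc
  rw [Set.union_compl_self] at h
  exact h.of_hom G.induceUnivIso.symm.toHom

theorem cliqueNum_induce_neighborSet_lt [Finite V] (a : V) :
    (G.induce (G.neighborSet a)).cliqueNum < G.cliqueNum := by
  classical
  obtain ⟨t, ht⟩ := (G.induce (G.neighborSet a)).exists_isNClique_cliqueNum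
  rw [isNClique_induce_iff] at ht
  have hins := ht.insert (a := a) (by simp +contextual)
  have := hins.isClique.card_le_cliqueNum
  rw [hins.card_eq] at this
  omega

variable {W₁ W₂ : Type*} {H₁ : SimpleGraph W₁} {H₂ : SimpleGraph W₂}

def Embedding.sumElim (φ : H₁ ↪g G) (ψ : H₂ ↪g G) (hne : ∀ a b, φ a ≠ ψ b)
    (hnadj : ∀ a b, ¬ G.Adj (φ a) (ψ b)) : H₁ ⊕g H₂ ↪g G where
  toFun := Sum.elim φ ψ
  inj' := by
    rintro (a | a) (b | b) h
    · exact congrArg Sum.inl (φ.injective h)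
    · exact absurd h (hne a b)
    · exact absurd h.symm (hne b a)
    · exact congrArg Sum.inr (ψ.injective h)
  map_rel_iff' := by
    rintro (a | a) (b | b)
    · exact φ.map_rel_iff
    · exact iff_of_false (hnadj a b) (by simp)
    · exact iff_of_false (fun h => hnadj b a h.symm) (by simp)
    · exact ψ.map_rel_iff

noncomputable def sumInduceIsoInduceUnion {s t : Set V} (hst : Disjoint s t)
    (hadj : ∀ x ∈ s, ∀ y ∈ t, ¬ G.Adj x y) :
    G.induce s ⊕g G.induce t ≃g G.induce (s ∪ t) := by
  classical
  exact
  { toEquiv := (Equiv.Set.union hst).symm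
    map_rel_iff' := by
      rintro (⟨a, ha⟩ | ⟨a, ha⟩) (⟨b, hb⟩ | ⟨b, hb⟩)
      · simp
      · simpa using hadj a ha b hb
      · simpa [G.adj_comm] using hadj b hb a ha
      · simp }

theorem not_nonempty_embedding_induce (h : ¬ Nonempty (H₁ ↪g G)) (s : Set V) :
    ¬ Nonempty (H₁ ↪g G.induce s) :=
  fun ⟨e⟩ => h ⟨(Embedding.induce s).comp e⟩

theorem colorable_of_embedding_of_sum_free [Finite W₁]
    (hfree : ¬ Nonempty (H₁ ⊕g H₂ ↪g G)) (φ : H₁ ↪g G) {m n : ℕ}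
    (hnbhd : ∀ a, (G.induce (G.neighborSet (φ a))).Colorable m)
    (hfree₂ : ∀ s : Set V, ¬ Nonempty (H₂ ↪g G.induce s) → (G.induce s).Colorable n) :
    G.Colorable (Nat.card W₁ * (m + 1) + n) := by
  have := Fintype.ofFinite W₁
  set N := ⋃ a, insert (φ a) (G.neighborSet (φ a))
  have hN : (G.induce N).Colorable (Nat.card W₁ * (m + 1)) := by
    rw [Nat.card_eq_fintype_card]
    exact Colorable.induce_iUnion fun a => (hnbhd a).induce_insert (φ a)
  have hNc : (G.induce Nᶜ).Colorable n := by
    refine hfree₂ _ fun ⟨ψ⟩ =>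
      hfree ⟨Embedding.sumElim φ ((Embedding.induce Nᶜ).comp ψ) ?_ ?_⟩
    · intro a b h
      exact (ψ b).2 (Set.mem_iUnion_of_mem a (h ▸ Set.mem_insert _ _))
    · intro a b h
      exact (ψ b).2 (Set.mem_iUnion_of_mem a (Set.mem_insert_of_mem _ h))
  exact hN.of_induce_of_induce_compl hNc

end SimpleGraph

open SimpleGraph

theorem ChiBounding.of_embedding {W W' : Type} {H : SimpleGraph W} {T : SimpleGraph W'}
    (h : ChiBounding H) (e : T ↪g H) : ChiBounding T := by
  obtain ⟨f, hf⟩ := h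
  exact ⟨f, fun V _ G hfree => hf V G fun ⟨e'⟩ => hfree ⟨e'.comp e⟩⟩

theorem chiBounding_of_isEmpty {W : Type} [IsEmpty W] (H : SimpleGraph W) : ChiBounding H :=
  ⟨fun _ => 0, fun _ _ _ hfree => absurd ⟨⟨.ofIsEmpty, fun {a} => isEmptyElim a⟩⟩ hfree⟩

theorem chiBounding_iff_exists_colorable {W : Type} {H : SimpleGraph W} :
    ChiBounding H ↔ ∃ f : ℕ → ℕ, ∀ (V : Type) [Fintype V] (G : SimpleGraph V),
      ¬ Nonempty (H ↪g G) → ∀ k, G.cliqueNum ≤ k → G.Colorable (f k) := by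
  constructor
  · rintro ⟨f, hf⟩
    refine ⟨fun k => (Finset.range (k + 1)).sup f, fun V _ G hfree k hk => ?_⟩
    refine (chromaticNumber_le_iff_colorable.mp (hf V G hfree)).mono ?_
    exact Finset.le_sup (Finset.mem_range.mpr (Nat.lt_succ_of_le hk))
  · rintro ⟨f, hf⟩
    exact ⟨f, fun V _ G hfree => (hf V G hfree _ le_rfl).chromaticNumber_le⟩

theorem ChiBounding.sum {W₁ W₂ : Type} [Finite W₁] {H₁ : SimpleGraph W₁}
    {H₂ : SimpleGraph W₂} (h₁ : ChiBounding H₁) (h₂ : ChiBounding H₂) :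
    ChiBounding (H₁ ⊕g H₂) := by
  classical
  obtain ⟨f₁, hf₁⟩ := chiBounding_iff_exists_colorable.mp h₁
  obtain ⟨f₂, hf₂⟩ := chiBounding_iff_exists_colorable.mp h₂
  have bounded (k : ℕ) : ∃ c, ∀ (V : Type) [Fintype V] (G : SimpleGraph V),
      ¬ Nonempty (H₁ ⊕g H₂ ↪g G) → G.cliqueNum ≤ k → G.Colorable c := by
    induction k with
    | zero =>
      refine ⟨0, fun V _ G _ hk => colorable_zero_iff.mpr ⟨fun v => ?_⟩⟩
      have := IsClique.card_le_cliqueNum (G := G) (t := {v}) (tc := by simp)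
      rw [Finset.card_singleton] at this
      omega
    | succ k ih =>
      obtain ⟨c, hc⟩ := ih
      refine ⟨f₁ (k + 1) + (Nat.card W₁ * (c + 1) + f₂ (k + 1)), fun V _ G hfree hk => ?_⟩
      by_cases hφ : Nonempty (H₁ ↪g G)
      · obtain ⟨φ⟩ := hφ
        refine (colorable_of_embedding_of_sum_free hfree φ (fun a => ?_) fun s hs => ?_).mono
          (Nat.le_add_left _ _)
        · refine hc _ _ (not_nonempty_embedding_induce hfree _) ?_
          have := G.cliqueNum_induce_neighborSet_lt (φ a)
          omega
        · exact hf₂ _ _ hs _ ((cliqueNum_induce_le s).trans hk)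
      · exact (hf₁ V G hφ _ hk).mono (Nat.le_add_right _ _)
  choose F hF using bounded
  exact chiBounding_iff_exists_colorable.mpr ⟨F, fun V _ G hfree k => hF k V G hfree⟩

theorem ChiBounding.induce_union {W : Type} {H : SimpleGraph W} {s t : Set W} [Finite s]
    (hst : Disjoint s t) (hadj : ∀ x ∈ s, ∀ y ∈ t, ¬ H.Adj x y)
    (hs : ChiBounding (H.induce s)) (ht : ChiBounding (H.induce t)) :
    ChiBounding (H.induce (s ∪ t)) :=
  (hs.sum ht).of_embedding (sumInduceIsoInduceUnion hst hadj).symm.toEmbedding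

theorem chiBounding_induce_preimage_connectedComponentMk {W : Type} [Finite W]
    {H : SimpleGraph W} (h : ∀ c : H.ConnectedComponent, ChiBounding (H.induce c.supp))
    (S : Finset H.ConnectedComponent) :
    ChiBounding (H.induce (H.connectedComponentMk ⁻¹' S)) := by
  classical
  induction S using Finset.induction_on with
  | empty =>
    rw [Finset.coe_empty, Set.preimage_empty]
    exact chiBounding_of_isEmpty _
  | insert c S hc ih =>
    have hsplit : H.connectedComponentMk ⁻¹' ↑(insert c S) =
        c.supp ∪ H.connectedComponentMk ⁻¹' S := by
      ext x
      simp [ConnectedComponent.mem_supp_iff]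
    rw [hsplit]
    refine (h c).induce_union ?_ ?_ ih
    · refine Set.disjoint_left.mpr fun x hx hxS => hc ?_
      rwa [← (ConnectedComponent.mem_supp_iff _ _).mp hx]
    · intro x hx y hy hxy
      refine hc ?_
      rwa [← (ConnectedComponent.mem_supp_iff _ _).mp hx, ConnectedComponent.sound hxy.reachable]

theorem forest_chiBounding_iff_components_general {W : Type} [Fintype W]
    (H : SimpleGraph W) :
    ChiBounding H ↔ ∀ c : H.ConnectedComponent, ChiBounding (H.induce c.supp) := by
  refine ⟨fun h c => h.of_embedding (Embedding.induce c.supp), fun h => ?_⟩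
  have := Fintype.ofFinite H.ConnectedComponent
  have hU := chiBounding_induce_preimage_connectedComponentMk h Finset.univ
  rw [Finset.coe_univ, Set.preimage_univ] at hU
  exact hU.of_embedding H.induceUnivIso.symm.toEmbedding

/-- A forest `H` is χ-bounding if and only if every component of `H` is χ-bounding. -/
theorem forest_chiBounding_iff_components {W : Type} [Fintype W]
    (H : SimpleGraph W) (hH : H.IsAcyclic) :
    ChiBounding H ↔ ∀ c : H.ConnectedComponent, ChiBounding (H.induce c.supp) :=
  forest_chiBounding_iff_components_general H
end

section
/- If g ≥ 3 and a graph H contains a cycle of length g, then for every k there exists an H-free graph with clique number at most 2 and chromatic number greater than k; consequently every χ-bounding graph is a forest. -/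
open Finset Function

section Counting

variable {α β : Type*} [Fintype α] [DecidableEq α] [Fintype β] [DecidableEq β]

lemma card_filter_forall_mem_mul_pow (P : Finset α) (A : Finset β) :
    #{f : α → β | ∀ x ∈ P, f x ∈ A} * Fintype.card β ^ #P =
      #A ^ #P * Fintype.card β ^ Fintype.card α := by
  have hpi : ({f : α → β | ∀ x ∈ P, f x ∈ A} : Finset _) =
      Fintype.piFinset fun x => if x ∈ P then A else univ := by
    ext f
    simp only [mem_filter, mem_univ, true_and, Fintype.mem_piFinset]
    exact ⟨fun h x => by split_ifs with hx <;> simp [h x, hx],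
      fun h x hx => by simpa [hx] using h x⟩
  simp only [hpi, Fintype.card_piFinset, apply_ite, card_univ]
  rw [prod_ite, prod_const, prod_const, filter_not, filter_mem_eq_inter, univ_inter,
    ← compl_eq_univ_sdiff, card_compl, mul_assoc, pow_sub_mul_pow _ P.card_le_univ]

end Counting

lemma exists_mul_succ_le_two_pow (A : ℕ) : ∃ j, A * (j + 1) ≤ 2 ^ j := by
  refine ⟨2 * (2 * A + 1), ?_⟩
  calc A * (2 * (2 * A + 1) + 1) ≤ (2 * A + 1) * (2 * A + 1) := by nlinarith
    _ ≤ 2 ^ (2 * A + 1) * 2 ^ (2 * A + 1) :=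
        Nat.mul_le_mul (Nat.lt_two_pow_self).le (Nat.lt_two_pow_self).le
    _ = 2 ^ (2 * (2 * A + 1)) := by rw [← pow_add, ← two_mul]

lemma two_mul_pow_le_succ_pow {t : ℕ} (ht : 1 ≤ t) : 2 * t ^ t ≤ (t + 1) ^ t := by
  have ht' : (0 : ℚ) < t := by exact_mod_cast ht
  have hbernoulli : (2 : ℚ) ≤ (1 + 1 / t) ^ t := by
    have := one_add_mul_le_pow (a := (1 / t : ℚ)) (by linarith [one_div_pos.2 ht']) t
    rwa [mul_one_div_cancel ht'.ne', one_add_one_eq_two] at this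
  have key : (2 : ℚ) * t ^ t ≤ (t + 1) ^ t :=
    calc (2 : ℚ) * t ^ t ≤ (1 + 1 / t) ^ t * t ^ t := by gcongr
      _ = (t + 1) ^ t := by rw [← mul_pow]; congr 1; field_simp
  exact_mod_cast key

/-- Among `n ≤ 2 ^ (r - 1)` vertices there are at most `2 ^ (a * r) / 4` sets of size
`a = 2 * t * r + 1`, and each is independent in `G(n, 1 / (t + 1))` with probability
`(t / (t + 1)) ^ (t * a * r) ≤ 2 ^ (-(a * r))`. -/
lemma two_mul_choose_mul_pow_lt {n t r : ℕ} (ht : 1 ≤ t) (hr : 1 ≤ r) (hn : 2 * n ≤ 2 ^ r) :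
    2 * n.choose (2 * t * r + 1) * t ^ (2 * t * r + 1).choose 2 <
      (t + 1) ^ (2 * t * r + 1).choose 2 := by
  set a := 2 * t * r + 1 with ha_def
  rw [mul_assoc] at ha_def
  have ha : 3 ≤ a := by have : 1 ≤ t * r := Nat.one_le_iff_ne_zero.2 (by positivity); omega
  have hpairs : a.choose 2 = t * (a * r) := by
    rw [Nat.choose_two_right, show a - 1 = 2 * (t * r) by omega]
    rw [show a * (2 * (t * r)) = 2 * (t * (a * r)) by ring, Nat.mul_div_cancel_left _ two_pos]
  have hnonEdge : 2 ^ (a * r) * t ^ a.choose 2 ≤ (t + 1) ^ a.choose 2 := by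
    rw [hpairs, pow_mul t, pow_mul (t + 1), ← mul_pow]
    exact Nat.pow_le_pow_left (two_mul_pow_le_succ_pow ht) _
  have hchoose : 4 * n.choose a ≤ 2 ^ (a * r) :=
    calc 4 * n.choose a ≤ 2 ^ a * n ^ a :=
          Nat.mul_le_mul ((Nat.pow_le_pow_right two_pos ha).trans' (by norm_num))
            (Nat.choose_le_pow n a)
      _ = (2 * n) ^ a := (mul_pow _ _ _).symm
      _ ≤ (2 ^ r) ^ a := Nat.pow_le_pow_left hn a
      _ = 2 ^ (a * r) := by rw [← pow_mul, mul_comm]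
  have h4 : 4 * (n.choose a * t ^ a.choose 2) ≤ (t + 1) ^ a.choose 2 := by
    rw [← mul_assoc]
    exact (Nat.mul_le_mul_right _ hchoose).trans hnonEdge
  have hpos : 0 < (t + 1) ^ a.choose 2 := by positivity
  rw [mul_assoc]
  omega

/-- Take `m = 2 ^ j` with `j` large, `t + 1 = m ^ (g + 1)`, `r = (g + 2) * j + 1` and
`a = 2 * t * r + 1`, so that there are `m * (t + 1) = 2 ^ (r - 1)` vertices. -/
lemma exists_erdos_parameters (g k : ℕ) : ∃ m t a : ℕ, 4 * g * m ^ g < m * (t + 1) ∧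
    2 * (m * (t + 1)).choose a * t ^ a.choose 2 < (t + 1) ^ a.choose 2 ∧
    2 * k * a ≤ m * (t + 1) := by
  obtain ⟨j, hj⟩ := exists_mul_succ_le_two_pow (4 * (k + 1) * (g + 2))
  set m := 2 ^ j
  set r := (g + 2) * j + 1
  set t := m ^ (g + 1) - 1
  have ht1 : t + 1 = m ^ (g + 1) := Nat.sub_add_cancel (Nat.one_le_pow _ _ (Nat.two_pow_pos j))
  have hj' : 4 * (k + 1) * ((g + 2) * (j + 1)) ≤ m := by rw [← mul_assoc]; exact hj
  have hgm : 4 * (g + 2) ≤ m :=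
    hj.trans' (calc 4 * (g + 2) ≤ 4 * (g + 2) * ((k + 1) * (j + 1)) :=
          Nat.le_mul_of_pos_right _ (by positivity)
      _ = 4 * (k + 1) * (g + 2) * (j + 1) := by ring)
  have hkrm : 4 * k * r ≤ m :=
    hj'.trans' (Nat.mul_le_mul (by omega) (by rw [mul_add_one]; omega))
  have hkm : 2 * k ≤ m := hkrm.trans' (by nlinarith [show 1 ≤ r by omega])
  have ht : 1 ≤ t := by
    have : m ≤ m ^ (g + 1) := Nat.le_self_pow (by omega) m
    omega
  refine ⟨m, t, 2 * t * r + 1, ?_, two_mul_choose_mul_pow_lt ht (by omega) ?_, ?_⟩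
  · calc 4 * g * m ^ g < m * m ^ g := Nat.mul_lt_mul_of_pos_right (by omega) (by positivity)
      _ = m ^ (g + 1) := (pow_succ' m g).symm
      _ ≤ m * (t + 1) := by rw [ht1]; exact Nat.le_mul_of_pos_left _ (by positivity)
  · rw [ht1, ← pow_succ', ← pow_mul, ← pow_succ']
    exact le_of_eq (by congr 1; ring)
  · calc 2 * k * (2 * t * r + 1) = 4 * k * r * t + 2 * k := by ring
      _ ≤ m * t + m := by gcongr
      _ = m * (t + 1) := by ring

namespace SimpleGraph

section

variable {V : Type*} {G : SimpleGraph V}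

lemma cliqueFree_three_of_three_lt_egirth (h : 3 < G.egirth) : G.CliqueFree 3 := by
  intro s hs
  obtain ⟨u, w, hw, hlen⟩ := is3Clique_iff_exists_cycle_length_three.1 ⟨s, hs⟩
  exact (egirth_le_length hw).not_gt (by rwa [hlen])

lemma cliqueNum_le_of_cliqueFree {n : ℕ} (h : G.CliqueFree (n + 1)) : G.cliqueNum ≤ n := by
  obtain ⟨s, hs⟩ := G.exists_isNClique_cliqueNum
  by_contra! hn
  exact h.mono hn s hs

lemma indepNum_induce_le [Finite V] (s : Set V) : (G.induce s).indepNum ≤ G.indepNum := by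
  obtain ⟨t, ht⟩ := (G.induce s).exists_isNIndepSet_indepNum
  rw [← ht.card_eq, ← card_map (Embedding.subtype _)]
  refine IsIndepSet.card_le_indepNum ?_
  intro x hx y hy hxy
  simp only [coe_map, Set.mem_image, mem_coe, Embedding.subtype_apply] at hx hy
  obtain ⟨x, hx, rfl⟩ := hx
  obtain ⟨y, hy, rfl⟩ := hy
  exact ht.isIndepSet hx hy (by rintro rfl; exact hxy rfl)

lemma exists_isIndepSet_card_eq_of_le_indepNum {a : ℕ} (h : a ≤ G.indepNum) :
    ∃ s : Finset V, G.IsIndepSet s ∧ #s = a := by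
  obtain ⟨t, ht⟩ := G.exists_isNIndepSet_indepNum
  obtain ⟨s, hst, hs⟩ := exists_subset_card_eq (ht.card_eq ▸ h)
  exact ⟨s, ht.isIndepSet.mono (by exact_mod_cast hst), hs⟩

lemma card_le_mul_indepNum_of_colorable [Fintype V] {k : ℕ} (hG : G.Colorable k) :
    Fintype.card V ≤ k * G.indepNum := by
  classical
  obtain ⟨C⟩ := hG
  calc Fintype.card V = ∑ c : Fin k, #{v | C v = c} := by
        rw [← card_univ, card_eq_sum_card_fiberwise fun v _ => mem_univ (C v)]
    _ ≤ ∑ _c : Fin k, G.indepNum := sum_le_sum fun c _ =>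
        IsIndepSet.card_le_indepNum (by simpa [Coloring.colorClass] using C.isIndepSet_colorClass c)
    _ = k * G.indepNum := by simp

lemma lt_chromaticNumber_of_mul_indepNum_lt [Fintype V] {k : ℕ}
    (h : k * G.indepNum < Fintype.card V) : k < G.chromaticNumber := by
  by_contra! hk
  exact (card_le_mul_indepNum_of_colorable (chromaticNumber_le_iff_colorable.1 hk)).not_gt h

def shortCycleVerts (G : SimpleGraph V) (g : ℕ) : Set V :=
  {u | ∃ w : G.Walk u u, w.IsCycle ∧ w.length ≤ g}

lemma lt_egirth_induce_compl_shortCycleVerts (g : ℕ) :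
    g < (G.induce (G.shortCycleVerts g)ᶜ).egirth := by
  rw [← ENat.add_one_le_iff (ENat.natCast_ne_top g), le_egirth]
  intro u w hw
  by_contra! hlen
  refine u.2 ⟨w.map (Embedding.induce _).toHom, hw.map Subtype.val_injective,
    (Walk.length_map _ _).trans_le ?_⟩
  have : w.length < g + 1 := by exact_mod_cast hlen
  omega

def IsCyclicTuple (G : SimpleGraph V) {ℓ : ℕ} (v : Fin ℓ → V) : Prop :=
  Injective v ∧ ∀ i, G.Adj (v i) (v (finRotate ℓ i))

lemma isCyclicTuple_of_adj_succ {ℓ : ℕ} {p : ℕ → V} (hinj : Set.InjOn p {i | i < ℓ})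
    (hadj : ∀ i < ℓ, G.Adj (p i) (p (i + 1))) (hp : p ℓ = p 0) :
    G.IsCyclicTuple fun i : Fin ℓ => p i := by
  refine ⟨fun i j hij => Fin.ext (hinj i.2 j.2 hij), fun i => ?_⟩
  obtain ⟨k, rfl⟩ : ∃ k, ℓ = k + 1 := ⟨ℓ - 1, by have := i.2; omega⟩
  dsimp only
  rw [finRotate_apply, Fin.val_add_one]
  split_ifs with hi
  · simpa [hi, hp] using hadj k (by omega)
  · exact hadj i i.2

lemma Walk.IsCycle.isCyclicTuple_getVert {u : V} {w : G.Walk u u} (hw : w.IsCycle) :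
    G.IsCyclicTuple fun i : Fin w.length => w.getVert i := by
  refine isCyclicTuple_of_adj_succ (fun i hi j hj hij => hw.getVert_injOn' ?_ ?_ hij)
    (fun i hi => w.adj_getVert_succ hi) (by simp)
  · simp only [Set.mem_ofPred_eq] at hi ⊢; omega
  · simp only [Set.mem_ofPred_eq] at hj ⊢; omega

def cycleEdges [DecidableEq V] {ℓ : ℕ} (v : Fin ℓ → V) : Finset (Sym2 V) :=
  univ.image fun i => s(v i, v (finRotate ℓ i))

lemma card_cycleEdges [DecidableEq V] {ℓ : ℕ} (hℓ : 3 ≤ ℓ) {v : Fin ℓ → V} (hv : Injective v) :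
    #(cycleEdges v) = ℓ := by
  obtain ⟨k, rfl⟩ : ∃ k, ℓ = k + 1 := ⟨ℓ - 1, by omega⟩
  rw [cycleEdges, card_image_of_injective, card_univ, Fintype.card_fin]
  intro i j hij
  simp only [finRotate_apply, Sym2.eq_iff, hv.eq_iff] at hij
  rcases hij with ⟨hij, -⟩ | ⟨rfl, hji⟩
  · exact hij
  · rw [add_assoc, add_eq_left, Fin.ext_iff] at hji
    simp [Fin.val_add, Nat.mod_eq_of_lt (by omega : 2 < k + 1)] at hji

open scoped Classical in
lemma ncard_shortCycleVerts_le [Fintype V] (g : ℕ) :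
    (G.shortCycleVerts g).ncard ≤ ∑ ℓ ∈ Icc 3 g, #{v : Fin ℓ → V | G.IsCyclicTuple v} := by
  let cycleVertsOfLength (ℓ : ℕ) : Finset V := {u | ∃ w : G.Walk u u, w.IsCycle ∧ w.length = ℓ}
  calc (G.shortCycleVerts g).ncard ≤ #((Icc 3 g).biUnion cycleVertsOfLength) := by
        rw [← Set.ncard_coe_finset]
        refine Set.ncard_le_ncard fun u ⟨w, hw, hlen⟩ => ?_
        simp only [coe_biUnion, mem_coe, mem_Icc, Set.mem_iUnion]
        exact ⟨w.length, ⟨hw.three_le_length, hlen⟩,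
          by simpa [cycleVertsOfLength] using ⟨w, hw, rfl⟩⟩
    _ ≤ ∑ ℓ ∈ Icc 3 g, #(cycleVertsOfLength ℓ) := card_biUnion_le
    _ ≤ ∑ ℓ ∈ Icc 3 g, #{v : Fin ℓ → V | G.IsCyclicTuple v} := by
        refine sum_le_sum fun ℓ hℓ => ?_
        have hℓ : 0 < ℓ := by rw [mem_Icc] at hℓ; omega
        refine (card_le_card fun u hu => ?_).trans
          (card_image_le (f := fun v : Fin ℓ → V => v ⟨0, hℓ⟩))
        obtain ⟨w, hw, rfl⟩ := (mem_filter.1 hu).2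
        exact mem_image.2 ⟨_, mem_filter.2 ⟨mem_univ _, hw.isCyclicTuple_getVert⟩, w.getVert_zero⟩

end

section RandomGraph

open scoped Classical

variable {V : Type*} [Fintype V] [DecidableEq V] {t : ℕ}

/-- For uniformly random labels this is the random graph `G(card V, 1 / (t + 1))`; below,
probabilities are counted as numbers of labellings, multiplied out to stay in `ℕ`. -/
def labelGraph (f : Sym2 V → Fin (t + 1)) : SimpleGraph V := fromEdgeSet {e | f e = 0}

lemma card_isCyclicTuple_labelGraph_mul_le {ℓ : ℕ} (hℓ : 3 ≤ ℓ) (v : Fin ℓ → V) :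
    #{f : Sym2 V → Fin (t + 1) | (labelGraph f).IsCyclicTuple v} * (t + 1) ^ ℓ ≤
      (t + 1) ^ Fintype.card (Sym2 V) := by
  by_cases hv : Injective v
  · calc #{f : Sym2 V → Fin (t + 1) | (labelGraph f).IsCyclicTuple v} * (t + 1) ^ ℓ
        ≤ #{f : Sym2 V → Fin (t + 1) | ∀ e ∈ cycleEdges v, f e ∈ ({0} : Finset _)} *
            Fintype.card (Fin (t + 1)) ^ #(cycleEdges v) := by
          rw [card_cycleEdges hℓ hv, Fintype.card_fin]
          gcongr with f
          intro hf e he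
          obtain ⟨i, -, rfl⟩ := mem_image.1 he
          exact mem_singleton.2 ((fromEdgeSet_adj _).1 (hf.2 i)).1
      _ = (t + 1) ^ Fintype.card (Sym2 V) := by
          rw [card_filter_forall_mem_mul_pow, card_singleton, one_pow, one_mul, Fintype.card_fin]
  · rw [filter_false_of_mem fun f _ hf => hv hf.1]
    simp

lemma sum_card_isCyclicTuple_labelGraph_mul_le {ℓ : ℕ} (hℓ : 3 ≤ ℓ) :
    (∑ f : Sym2 V → Fin (t + 1), #{v : Fin ℓ → V | (labelGraph f).IsCyclicTuple v}) * (t + 1) ^ ℓ ≤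
      Fintype.card V ^ ℓ * (t + 1) ^ Fintype.card (Sym2 V) := by
  have hswap : ∑ f : Sym2 V → Fin (t + 1), #{v : Fin ℓ → V | (labelGraph f).IsCyclicTuple v} =
      ∑ v : Fin ℓ → V, #{f : Sym2 V → Fin (t + 1) | (labelGraph f).IsCyclicTuple v} :=
    sum_card_bipartiteAbove_eq_sum_card_bipartiteBelow _
  calc _ = ∑ v : Fin ℓ → V, #{f : Sym2 V → Fin (t + 1) | (labelGraph f).IsCyclicTuple v} *
        (t + 1) ^ ℓ := by rw [hswap, sum_mul]
    _ ≤ ∑ _v : Fin ℓ → V, (t + 1) ^ Fintype.card (Sym2 V) :=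
        sum_le_sum fun v _ => card_isCyclicTuple_labelGraph_mul_le hℓ v
    _ = _ := by simp

lemma sum_ncard_shortCycleVerts_labelGraph_le {m : ℕ} (g : ℕ)
    (hV : Fintype.card V = m * (t + 1)) :
    ∑ f : Sym2 V → Fin (t + 1), ((labelGraph f).shortCycleVerts g).ncard ≤
      g * m ^ g * (t + 1) ^ Fintype.card (Sym2 V) := by
  set T := (t + 1) ^ Fintype.card (Sym2 V)
  have hcycles : ∀ ℓ ∈ Icc 3 g,
      ∑ f : Sym2 V → Fin (t + 1), #{v : Fin ℓ → V | (labelGraph f).IsCyclicTuple v} ≤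
        m ^ g * T := by
    intro ℓ hℓ
    rw [mem_Icc] at hℓ
    have h := sum_card_isCyclicTuple_labelGraph_mul_le (t := t) (V := V) hℓ.1
    rw [hV, mul_pow, mul_right_comm] at h
    refine (Nat.le_of_mul_le_mul_right h (by positivity)).trans (Nat.mul_le_mul_right _ ?_)
    rcases m.eq_zero_or_pos with rfl | hm
    · simp [zero_pow (by omega : ℓ ≠ 0)]
    · exact Nat.pow_le_pow_right hm hℓ.2
  calc ∑ f : Sym2 V → Fin (t + 1), ((labelGraph f).shortCycleVerts g).ncard
      ≤ ∑ f : Sym2 V → Fin (t + 1), ∑ ℓ ∈ Icc 3 g,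
          #{v : Fin ℓ → V | (labelGraph f).IsCyclicTuple v} :=
        sum_le_sum fun f _ => ncard_shortCycleVerts_le g
    _ = ∑ ℓ ∈ Icc 3 g, ∑ f : Sym2 V → Fin (t + 1),
          #{v : Fin ℓ → V | (labelGraph f).IsCyclicTuple v} := sum_comm
    _ ≤ ∑ _ℓ ∈ Icc 3 g, m ^ g * T := sum_le_sum hcycles
    _ ≤ g * m ^ g * T := by
        rw [sum_const, Nat.card_Icc, smul_eq_mul, mul_assoc]
        exact Nat.mul_le_mul_right _ (by omega)

lemma card_le_indepNum_labelGraph_mul_le (a : ℕ) :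
    #{f : Sym2 V → Fin (t + 1) | a ≤ (labelGraph f).indepNum} * (t + 1) ^ a.choose 2 ≤
      (Fintype.card V).choose a * t ^ a.choose 2 * (t + 1) ^ Fintype.card (Sym2 V) := by
  let pairs (s : Finset V) : Finset (Sym2 V) := s.offDiag.image (uncurry Sym2.mk)
  let nonEdges (s : Finset V) : Finset (Sym2 V → Fin (t + 1)) :=
    {f | ∀ e ∈ pairs s, f e ∈ ({0}ᶜ : Finset (Fin (t + 1)))}
  have hsub : ({f | a ≤ (labelGraph f).indepNum} : Finset (Sym2 V → Fin (t + 1))) ⊆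
      (univ.powersetCard a).biUnion nonEdges := by
    intro f hf
    obtain ⟨s, hs, rfl⟩ := exists_isIndepSet_card_eq_of_le_indepNum (mem_filter.1 hf).2
    refine mem_biUnion.2 ⟨s, mem_powersetCard_univ.2 rfl, mem_filter.2 ⟨mem_univ _, ?_⟩⟩
    intro e he
    obtain ⟨⟨x, y⟩, hxy, rfl⟩ := mem_image.1 he
    rw [mem_offDiag] at hxy
    exact mem_compl.2 fun h0 => hs hxy.1 hxy.2.1 hxy.2.2
      ((fromEdgeSet_adj _).2 ⟨mem_singleton.1 h0, hxy.2.2⟩)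
  have hnonEdges : ∀ s ∈ univ.powersetCard a,
      #(nonEdges s) * (t + 1) ^ a.choose 2 = t ^ a.choose 2 * (t + 1) ^ Fintype.card (Sym2 V) := by
    intro s hs
    have hpairs : #(pairs s) = a.choose 2 := by
      rw [Sym2.card_image_offDiag, (mem_powersetCard_univ.1 hs)]
    have := card_filter_forall_mem_mul_pow (pairs s) ({0}ᶜ : Finset (Fin (t + 1)))
    rwa [hpairs, card_compl, card_singleton, Fintype.card_fin, Nat.add_sub_cancel] at this
  calc _ ≤ (∑ s ∈ univ.powersetCard a, #(nonEdges s)) * (t + 1) ^ a.choose 2 :=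
        Nat.mul_le_mul_right _ ((card_le_card hsub).trans card_biUnion_le)
    _ = ∑ s ∈ univ.powersetCard a, t ^ a.choose 2 * (t + 1) ^ Fintype.card (Sym2 V) := by
        rw [sum_mul]; exact sum_congr rfl hnonEdges
    _ = _ := by rw [sum_const, card_powersetCard, card_univ, smul_eq_mul, mul_assoc]

lemma exists_labelGraph_shortCycleVerts_indepNum_lt {m g a : ℕ}
    (hV : Fintype.card V = m * (t + 1)) (hshort : 4 * g * m ^ g < Fintype.card V)
    (hindep : 2 * (Fintype.card V).choose a * t ^ a.choose 2 < (t + 1) ^ a.choose 2) :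
    ∃ f : Sym2 V → Fin (t + 1), 2 * ((labelGraph f).shortCycleVerts g).ncard < Fintype.card V ∧
      (labelGraph f).indepNum < a := by
  set n := Fintype.card V
  set T := (t + 1) ^ Fintype.card (Sym2 V)
  set c := (t + 1) ^ a.choose 2
  let manyShort : Finset (Sym2 V → Fin (t + 1)) :=
    {f | n ≤ 2 * ((labelGraph f).shortCycleVerts g).ncard}
  let largeIndep : Finset (Sym2 V → Fin (t + 1)) := {f | a ≤ (labelGraph f).indepNum}
  have hmanyShort : 2 * #manyShort < T := by
    have hmarkov : n * #manyShort ≤ 2 * ∑ f : Sym2 V → Fin (t + 1),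
        ((labelGraph f).shortCycleVerts g).ncard := by
      rw [mul_comm, ← smul_eq_mul, mul_sum]
      exact (card_nsmul_le_sum _ _ _ fun f hf => (mem_filter.1 hf).2).trans
        (sum_le_sum_of_subset (filter_subset _ _))
    have hsum := sum_ncard_shortCycleVerts_labelGraph_le (V := V) g hV
    refine Nat.lt_of_mul_lt_mul_left (a := n) ?_
    calc n * (2 * #manyShort) = 2 * (n * #manyShort) := by ring
      _ ≤ 2 * (2 * (g * m ^ g * T)) :=
          Nat.mul_le_mul_left 2 (hmarkov.trans (Nat.mul_le_mul_left 2 hsum))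
      _ = 4 * g * m ^ g * T := by ring
      _ < n * T := Nat.mul_lt_mul_of_pos_right hshort (by positivity)
  have hlargeIndep : 2 * #largeIndep < T := by
    have hcount := card_le_indepNum_labelGraph_mul_le (V := V) (t := t) a
    refine Nat.lt_of_mul_lt_mul_right (a := c) ?_
    calc 2 * #largeIndep * c ≤ 2 * (n.choose a * t ^ a.choose 2 * T) := by
          rw [mul_assoc]; gcongr
      _ = 2 * n.choose a * t ^ a.choose 2 * T := by ring
      _ < c * T := Nat.mul_lt_mul_of_pos_right hindep (by positivity)
      _ = T * c := mul_comm _ _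
  obtain ⟨f, -, hf⟩ := exists_mem_notMem_of_card_lt_card (s := manyShort ∪ largeIndep)
    (t := univ) (by
      have := card_union_le manyShort largeIndep
      rw [card_univ, Fintype.card_fun, Fintype.card_fin]
      omega)
  simp only [mem_union, mem_filter, mem_univ, true_and, not_or, not_le, manyShort,
    largeIndep] at hf
  exact ⟨f, hf⟩

theorem exists_lt_egirth_lt_chromaticNumber (g k : ℕ) :
    ∃ (V : Type) (_ : Fintype V) (G : SimpleGraph V), g < G.egirth ∧ k < G.chromaticNumber := by
  obtain ⟨m, t, a, hshort, hindep, hka⟩ := exists_erdos_parameters g k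
  obtain ⟨f, hf_short, hf_indep⟩ := exists_labelGraph_shortCycleVerts_indepNum_lt
    (V := Fin (m * (t + 1))) (m := m) (t := t) (by simp) (by simpa) (by simpa)
  set G := labelGraph f
  set B := G.shortCycleVerts g
  refine ⟨↥Bᶜ, inferInstance, G.induce Bᶜ, lt_egirth_induce_compl_shortCycleVerts g,
    lt_chromaticNumber_of_mul_indepNum_lt ?_⟩
  have hcard : B.ncard + Fintype.card ↥Bᶜ = m * (t + 1) := by
    rw [← Nat.card_eq_fintype_card, Nat.card_coe_set_eq, Set.ncard_add_ncard_compl,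
      Nat.card_eq_fintype_card, Fintype.card_fin]
  have hindepNum : k * (G.induce Bᶜ).indepNum ≤ k * a :=
    Nat.mul_le_mul_left k ((indepNum_induce_le Bᶜ).trans hf_indep.le)
  rw [Fintype.card_fin] at hf_short
  rw [mul_assoc] at hka
  omega

end RandomGraph

theorem exists_not_nonempty_embedding_cliqueNum_le_two_lt_chromaticNumber {W : Type*}
    (H : SimpleGraph W) {w : W} {c : H.Walk w w} (hc : c.IsCycle) (k : ℕ) :
    ∃ (V : Type) (_ : Fintype V) (G : SimpleGraph V),
      ¬ Nonempty (H ↪g G) ∧ G.cliqueNum ≤ 2 ∧ (k : ℕ∞) < G.chromaticNumber := by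
  obtain ⟨V, hV, G, hgirth, hχ⟩ := exists_lt_egirth_lt_chromaticNumber c.length k
  have hthree : 3 < G.egirth := hgirth.trans_le' (by exact_mod_cast hc.three_le_length)
  refine ⟨V, hV, G, fun ⟨e⟩ => ?_,
    cliqueNum_le_of_cliqueFree (cliqueFree_three_of_three_lt_egirth hthree), hχ⟩
  exact (e.isContained.egirth_le.trans (egirth_le_length hc)).not_gt hgirth

end SimpleGraph

open SimpleGraph

theorem ChiBounding.isAcyclic {W : Type} {H : SimpleGraph W} (hH : ChiBounding H) :
    H.IsAcyclic := by
  obtain ⟨f, hf⟩ := hH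
  intro v c hc
  obtain ⟨V, hV, G, hfree, hω, hχ⟩ :=
    exists_not_nonempty_embedding_cliqueNum_le_two_lt_chromaticNumber H hc (f 0 + f 1 + f 2)
  have hf_le : f G.cliqueNum ≤ f 0 + f 1 + f 2 := by interval_cases G.cliqueNum <;> omega
  exact (hχ.trans_le ((hf V G hfree).trans (by exact_mod_cast hf_le))).false

/-- If `g ≥ 3` and `H` contains a cycle of length `g`, then for every `k` there is an
`H`-free graph with clique number at most 2 and chromatic number greater than `k`;
consequently every χ-bounding graph is a forest (acyclic). -/
theorem graphs_with_cycles_not_chiBounding :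
    (∀ (g : ℕ), 3 ≤ g → ∀ {W : Type} (H : SimpleGraph W),
      (∃ (w : W) (c : H.Walk w w), c.IsCycle ∧ c.length = g) →
      ∀ k : ℕ, ∃ (V : Type) (_ : Fintype V) (G : SimpleGraph V),
        ¬ Nonempty (H ↪g G) ∧ G.cliqueNum ≤ 2 ∧ (k : ℕ∞) < G.chromaticNumber) ∧
    (∀ {W : Type} (H : SimpleGraph W), ChiBounding H → H.IsAcyclic) :=
  ⟨fun _ _ _ H ⟨_, _, hc, _⟩ k =>
    exists_not_nonempty_embedding_cliqueNum_le_two_lt_chromaticNumber H hc k,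
   fun _ hH => hH.isAcyclic⟩
end

section
/- If a graph G can be oriented acyclically such that it contains no induced directed path on four vertices oriented as →←← , then G satisfies χ(G) = ω(G) (Chvátal). -/
/-!
Extend the acyclic orientation to a linear order `<`. Whichever way the middle edge `bc` of an
induced path `abcd` is oriented, one of `abcd`, `dcba` is the forbidden pattern as soon as
`a < b` and `d < c`; so `<` is a perfect order in Chvátal's sense.

Let `S` be the stable set chosen greedily along `<`. For a clique `K` disjoint from `S`, send
each `b ∈ K` to its least earlier neighbour `β b ∈ S` and let `a = β b₀` be the largest of
these. If `a` missed some `c ∈ K`, then `a b₀ c (β c)` would be an induced path with `a < b₀`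
and `β c < c`. So `a` extends `K`: deleting `S` lowers the clique number, and induction colours
`G` with `ω(G)` colours.
-/

open Relation

/-- `r` is an orientation of `G`: every arc is an edge, and every edge gets exactly
one direction. -/
def IsOrientation {V : Type*} (G : SimpleGraph V) (r : V → V → Prop) : Prop :=
  (∀ x y, r x y → G.Adj x y) ∧ (∀ x y, G.Adj x y → (r x y ↔ ¬ r y x))

theorem exists_linearOrder_lt_of_acyclic {α : Type*} {r : α → α → Prop}
    (hr : ∀ x, ¬ TransGen r x x) : ∃ _ : LinearOrder α, ∀ x y, r x y → x < y := by
  have : IsPartialOrder α (ReflTransGen r) :=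
    { refl := fun _ => .refl
      trans := fun _ _ _ => .trans
      antisymm := fun x y hxy hyx => by
        rcases reflTransGen_iff_eq_or_transGen.mp hxy with h | hxy
        · exact h.symm
        rcases reflTransGen_iff_eq_or_transGen.mp hyx with h | hyx
        · exact h
        exact (hr x (hxy.trans hyx)).elim }
  obtain ⟨s, hs, hrs⟩ := extend_partialOrder (ReflTransGen r)
  let o : LinearOrder α :=
    { le := s
      le_refl := hs.refl
      le_trans := fun _ _ _ => hs.trans _ _ _
      le_antisymm := fun _ _ => hs.antisymm _ _
      le_total := hs.total
      toDecidableLE := Classical.decRel s }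
  refine ⟨o, fun x y hxy => lt_of_le_of_ne (hrs x y (.single hxy)) ?_⟩
  rintro rfl
  exact hr x (.single hxy)

namespace SimpleGraph

variable {V : Type*} {G : SimpleGraph V}

structure IsInducedP4 (G : SimpleGraph V) (a b c d : V) : Prop where
  adj_ab : G.Adj a b
  adj_bc : G.Adj b c
  adj_cd : G.Adj c d
  not_adj_ac : ¬G.Adj a c
  not_adj_ad : ¬G.Adj a d
  not_adj_bd : ¬G.Adj b d

namespace IsInducedP4

variable {a b c d : V}

theorem reverse (h : G.IsInducedP4 a b c d) : G.IsInducedP4 d c b a :=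
  ⟨h.adj_cd.symm, h.adj_bc.symm, h.adj_ab.symm,
    fun h' => h.not_adj_bd h'.symm, fun h' => h.not_adj_ad h'.symm,
    fun h' => h.not_adj_ac h'.symm⟩

theorem pairwise_ne (h : G.IsInducedP4 a b c d) :
    a ≠ b ∧ a ≠ c ∧ a ≠ d ∧ b ≠ c ∧ b ≠ d ∧ c ≠ d := by
  refine ⟨h.adj_ab.ne, ?_, ?_, h.adj_bc.ne, ?_, h.adj_cd.ne⟩
  · rintro rfl
    exact h.not_adj_ad h.adj_cd
  · rintro rfl
    exact h.not_adj_ac h.adj_cd.symm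
  · rintro rfl
    exact h.not_adj_ad h.adj_ab

end IsInducedP4

def IsPerfectOrder [LinearOrder V] (G : SimpleGraph V) : Prop :=
  ∀ ⦃a b c d⦄, G.IsInducedP4 a b c d → a < b → d < c → False

theorem IsPerfectOrder.induce [LinearOrder V] (hG : G.IsPerfectOrder) (s : Set V) :
    (G.induce s).IsPerfectOrder :=
  fun _ _ _ _ h => hG ⟨h.adj_ab, h.adj_bc, h.adj_cd, h.not_adj_ac, h.not_adj_ad, h.not_adj_bd⟩

theorem isPerfectOrder_of_orientation [LinearOrder V] {r : V → V → Prop}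
    (hor : IsOrientation G r) (hr : ∀ x y, r x y → x < y)
    (hforb : ∀ a b c d, G.IsInducedP4 a b c d → r a b → r c b → r d c → False) :
    G.IsPerfectOrder := by
  have hup : ∀ x y, G.Adj x y → x < y → r x y := fun x y hxy hlt =>
    (hor.2 x y hxy).mpr fun hyx => lt_asymm hlt (hr y x hyx)
  intro a b c d h hab hdc
  by_cases hbc : r b c
  · exact hforb d c b a h.reverse (hup d c h.adj_cd.symm hdc) hbc (hup a b h.adj_ab hab)
  · exact hforb a b c d h (hup a b h.adj_ab hab) ((hor.2 c b h.adj_bc.symm).mpr hbc)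
      (hup d c h.adj_cd.symm hdc)

section Greedy

variable [LinearOrder V] [WellFoundedLT V] (G : SimpleGraph V)

noncomputable def greedyStableSet : Set V :=
  {v | wellFounded_lt.fix (fun v rec => ∀ u (h : u < v), G.Adj u v → ¬ rec u h) v}

variable {G}

theorem mem_greedyStableSet {v : V} :
    v ∈ G.greedyStableSet ↔ ∀ u < v, G.Adj u v → u ∉ G.greedyStableSet :=
  Iff.of_eq (wellFounded_lt.fix_eq _ _)

theorem isIndepSet_greedyStableSet : G.IsIndepSet G.greedyStableSet := by
  intro u hu v hv huv hadj
  rcases huv.lt_or_gt with h | h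
  · exact mem_greedyStableSet.mp hv u h hadj hu
  · exact mem_greedyStableSet.mp hu v h hadj.symm hv

theorem exists_adj_lt_of_notMem_greedyStableSet {v : V} (hv : v ∉ G.greedyStableSet) :
    ∃ u ∈ G.greedyStableSet, u < v ∧ G.Adj u v := by
  rw [mem_greedyStableSet] at hv
  push Not at hv
  obtain ⟨u, huv, hadj, hu⟩ := hv
  exact ⟨u, hu, huv, hadj⟩

theorem exists_least_adj_lt_of_notMem_greedyStableSet {v : V} (hv : v ∉ G.greedyStableSet) :
    ∃ u ∈ G.greedyStableSet, u < v ∧ G.Adj u v ∧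
      ∀ w ∈ G.greedyStableSet, w < v → G.Adj w v → u ≤ w := by
  obtain ⟨u, ⟨hu, huv, hadj⟩, hmin⟩ := wellFounded_lt.has_min
    {u | u ∈ G.greedyStableSet ∧ u < v ∧ G.Adj u v}
    (exists_adj_lt_of_notMem_greedyStableSet hv)
  exact ⟨u, hu, huv, hadj, fun w hw hwv hwadj => not_lt.mp (hmin w ⟨hw, hwv, hwadj⟩)⟩

theorem greedyStableSet_nonempty [Nonempty V] : G.greedyStableSet.Nonempty := by
  obtain ⟨v⟩ := ‹Nonempty V›
  by_cases hv : v ∈ G.greedyStableSet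
  · exact ⟨v, hv⟩
  · obtain ⟨u, hu, -⟩ := exists_adj_lt_of_notMem_greedyStableSet hv
    exact ⟨u, hu⟩

theorem IsPerfectOrder.exists_mem_greedyStableSet_forall_adj (hG : G.IsPerfectOrder)
    {K : Finset V} (hK : G.IsClique (K : Set V)) (hKS : ∀ b ∈ K, b ∉ G.greedyStableSet)
    (hne : K.Nonempty) : ∃ a ∈ G.greedyStableSet, ∀ b ∈ K, G.Adj a b := by
  choose! β hβS hβlt hβadj hβmin using
    fun b hb => exists_least_adj_lt_of_notMem_greedyStableSet (hKS b hb)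
  obtain ⟨b₀, hb₀, hmax⟩ := K.exists_max_image β hne
  refine ⟨β b₀, hβS b₀ hb₀, fun c hc => ?_⟩
  by_contra hac
  have hb₀c : b₀ ≠ c := by
    rintro rfl
    exact hac (hβadj b₀ hb₀)
  have hlt : β c < β b₀ := (hmax c hc).lt_of_ne fun h => hac (h ▸ hβadj c hc)
  have hnad : ¬ G.Adj (β b₀) (β c) :=
    isIndepSet_greedyStableSet (hβS b₀ hb₀) (hβS c hc) hlt.ne'
  have hnbd : ¬ G.Adj b₀ (β c) := fun h =>
    (hβmin b₀ hb₀ (β c) (hβS c hc) (hlt.trans (hβlt b₀ hb₀)) h.symm).not_gt hlt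
  exact hG ⟨hβadj b₀ hb₀, hK hb₀ hc hb₀c, (hβadj c hc).symm, hac, hnad, hnbd⟩
    (hβlt b₀ hb₀) (hβlt c hc)

end Greedy

theorem colorable_succ_of_isIndepSet {n : ℕ} {S : Set V} (hS : G.IsIndepSet S)
    (h : (G.induce Sᶜ).Colorable n) : G.Colorable (n + 1) := by
  classical
  obtain ⟨C⟩ := h
  refine ⟨Coloring.mk
    (fun v => if hv : v ∈ S then Fin.last n else (C ⟨v, hv⟩).castSucc) ?_⟩
  intro u v huv
  split_ifs with hu hv hv
  · exact (hS hu hv huv.ne huv).elim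
  · exact (Fin.castSucc_lt_last _).ne'
  · exact (Fin.castSucc_lt_last _).ne
  · exact fun h => C.valid (v := ⟨u, hu⟩) (w := ⟨v, hv⟩) huv (Fin.castSucc_injective _ h)

section Finite

variable [LinearOrder V] [Finite V]

theorem IsPerfectOrder.cliqueNum_induce_compl_greedyStableSet_lt [Nonempty V]
    (hG : G.IsPerfectOrder) : (G.induce G.greedyStableSetᶜ).cliqueNum < G.cliqueNum := by
  classical
  obtain ⟨t, ht⟩ := (G.induce G.greedyStableSetᶜ).exists_isNClique_cliqueNum
  rw [isNClique_induce_iff] at ht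
  obtain ⟨a, ha, haK⟩ :
      ∃ a ∈ G.greedyStableSet, ∀ b ∈ t.map (.subtype _), G.Adj a b := by
    rcases (t.map (.subtype _)).eq_empty_or_nonempty with hK | hK
    · obtain ⟨a, ha⟩ := greedyStableSet_nonempty (G := G)
      exact ⟨a, ha, by simp [hK]⟩
    · exact hG.exists_mem_greedyStableSet_forall_adj ht.isClique (by simp_all) hK
  have hins := ht.insert haK
  rw [Nat.lt_iff_add_one_le, ← hins.card_eq]
  exact hins.isClique.card_le_cliqueNum

theorem IsPerfectOrder.colorable_cliqueNum (hG : G.IsPerfectOrder) :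
    G.Colorable G.cliqueNum := by
  induction hn : Nat.card V using Nat.strong_induction_on generalizing V with
  | _ n ih =>
  cases isEmpty_or_nonempty V
  · exact .of_isEmpty _
  obtain ⟨a, ha⟩ := greedyStableSet_nonempty (G := G)
  have hcard : Nat.card ↥G.greedyStableSetᶜ < n :=
    hn ▸ Finite.card_subtype_lt (p := (· ∈ G.greedyStableSetᶜ)) (not_not_intro ha)
  have hω := hG.cliqueNum_induce_compl_greedyStableSet_lt
  have hcol : (G.induce G.greedyStableSetᶜ).Colorable (G.cliqueNum - 1) :=
    (ih _ hcard (hG.induce _) rfl).mono (by omega)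
  exact Nat.sub_add_cancel (by omega : 1 ≤ G.cliqueNum) ▸
    colorable_succ_of_isIndepSet isIndepSet_greedyStableSet hcol

end Finite

end SimpleGraph

/-- Chvátal's theorem: if a finite graph `G` admits an acyclic orientation with no
induced four-vertex path `v₁v₂v₃v₄` oriented `v₁→v₂, v₃→v₂, v₄→v₃`, then
`χ(G) = ω(G)`. -/
theorem chvatal_no_oriented_path {V : Type*} [Fintype V] (G : SimpleGraph V)
    (r : V → V → Prop) (hor : IsOrientation G r)
    (hacyclic : ∀ x, ¬ Relation.TransGen r x x)
    (hpath : ¬ ∃ v₁ v₂ v₃ v₄ : V,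
      v₁ ≠ v₂ ∧ v₁ ≠ v₃ ∧ v₁ ≠ v₄ ∧ v₂ ≠ v₃ ∧ v₂ ≠ v₄ ∧ v₃ ≠ v₄ ∧
      G.Adj v₁ v₂ ∧ G.Adj v₂ v₃ ∧ G.Adj v₃ v₄ ∧
      ¬ G.Adj v₁ v₃ ∧ ¬ G.Adj v₁ v₄ ∧ ¬ G.Adj v₂ v₄ ∧
      r v₁ v₂ ∧ r v₃ v₂ ∧ r v₄ v₃) :
    G.chromaticNumber = (G.cliqueNum : ℕ∞) := by
  obtain ⟨_, hr⟩ := exists_linearOrder_lt_of_acyclic hacyclic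
  have hG : G.IsPerfectOrder := G.isPerfectOrder_of_orientation hor hr
    fun a b c d h hab hcb hdc => by
      obtain ⟨hab', hac, had, hbc, hbd, hcd⟩ := h.pairwise_ne
      exact hpath ⟨a, b, c, d, hab', hac, had, hbc, hbd, hcd, h.adj_ab, h.adj_bc, h.adj_cd,
        h.not_adj_ac, h.not_adj_ad, h.not_adj_bd, hab, hcb, hdc⟩
  exact le_antisymm hG.colorable_cliqueNum.chromaticNumber_le G.cliqueNum_le_chromaticNumber
end
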